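/- As Q → ∞, each of the proportions ρ²_Q((0,1),2), ρ²_Q((1,0),2) and ρ²_Q((1,1),2) of pairs of consecutive Farey fractions of order Q whose denominators are respectively (even, odd), (odd, even) and (odd, odd) tends to 1/3, while ρ²_Q((0,0),2) = 0 for every Q. -/

import Mathlib

/-
For coprime `q, q' ≤ Q` with `q + q' > Q`, Bézout gives fractions `a/q < b/q'` in `F_Q` with
`b q - a q' = 1`; any rational strictly between them has denominator at least `q + q' > Q`, so they
are consecutive in `F_Q`. For fixed `q` the admissible `q'` form a full period of residues mod `q`,
so there are `Φ(Q) = ∑_{q ≤ Q} φ(q) = #F_Q - 1` such pairs, and hence every pair of consecutive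
denominators arises exactly once. Coprimality forbids (even, even); (even, odd) pairs are counted by
`E(Q) = ∑_{q ≤ Q even} φ(q)`, (odd, even) pairs likewise by symmetry, and (odd, odd) pairs by
`Φ(Q) - 2E(Q)`. Since `φ(2m)` is `2φ(m)` or `φ(m)` according to the parity of `m`,
`E(Q) = Φ(Q/2) + E(Q/2)`, so `E(Q) = ∑_k Φ(Q / 2^(k+1))`. Möbius inversion gives
`Φ(Q) ~ 3Q²/π²`, hence by dominated convergence `E(Q) ~ Φ(Q) ∑_k 4^-(k+1) = Φ(Q)/3`.
-/

open Filter MeasureTheory Real Asymptotics Topology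

noncomputable section

/-- The Farey fractions of order `Q`: all rationals in `[0,1]` with denominator `≤ Q`. -/
def fareyFinset (Q : ℕ) : Finset ℚ :=
  ((Finset.range (Q + 1) ×ˢ Finset.Icc 1 Q).image fun p => (p.1 : ℚ) / (p.2 : ℚ)).filter
    fun x => x ≤ 1

/-- The Farey sequence of order `Q`, listed in increasing order. -/
def fareyList (Q : ℕ) : List ℚ := (fareyFinset Q).sort (· ≤ ·)

/-- `N^r_Q(c,d)`: the number of `r`-tuples of denominators of consecutive fractions in the
Farey sequence of order `Q` that are congruent to `c` componentwise modulo `d`. -/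
def Nr (Q r d : ℕ) (c : Fin r → ℕ) : ℕ :=
  ((Finset.range ((fareyList Q).length + 1 - r)).filter fun i =>
    ∀ j : Fin r, ((fareyList Q).getD (i + (j : ℕ)) 0).den % d = c j % d).card

/-- `ρ^r_Q(c,d) = N^r_Q(c,d) / (#F_Q - (r-1))`: the proportion of `r`-tuples of consecutive
Farey fractions of order `Q` whose denominators are congruent to `c` modulo `d`. -/
def rho (Q r d : ℕ) (c : Fin r → ℕ) : ℝ :=
  (Nr Q r d c : ℝ) / (((fareyFinset Q).card : ℝ) - ((r : ℝ) - 1))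

open Finset
open ArithmeticFunction (moebius abs_moebius_le_one sum_eq_iff_sum_mul_moebius_eq mul_apply
  sum_Ioc_mul_eq_sum_sum)

def totientSum (Q : ℕ) : ℕ := ∑ q ∈ Ioc 0 Q, q.totient

def evenTotientSum (Q : ℕ) : ℕ := ∑ q ∈ Ioc 0 Q with Even q, q.totient


theorem natCast_num_toNat_div_den {x : ℚ} (hx : 0 ≤ x) : (x.num.toNat : ℚ) / x.den = x := by
  rw [show (x.num.toNat : ℚ) = x.num by exact_mod_cast Int.toNat_of_nonneg (Rat.num_nonneg.2 hx),
    Rat.num_div_den]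

theorem mem_fareyFinset {Q : ℕ} {x : ℚ} : x ∈ fareyFinset Q ↔ 0 ≤ x ∧ x ≤ 1 ∧ x.den ≤ Q := by
  simp only [fareyFinset, mem_filter, mem_image, mem_product, mem_range, mem_Icc, Prod.exists]
  constructor
  · rintro ⟨⟨a, b, ⟨-, hb, hbQ⟩, rfl⟩, hx1⟩
    have hdvd : (((a : ℚ) / b).den : ℤ) ∣ b := by
      simpa [Rat.divInt_eq_div] using Rat.den_dvd a b
    exact ⟨by positivity, hx1, (Nat.le_of_dvd hb (by exact_mod_cast hdvd)).trans hbQ⟩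
  · rintro ⟨hx0, hx1, hxQ⟩
    have hle : x.num ≤ x.den := by simpa using (Rat.le_iff x 1).1 hx1
    exact ⟨⟨x.num.toNat, x.den, ⟨by omega, x.pos, hxQ⟩, natCast_num_toNat_div_den hx0⟩, hx1⟩

theorem num_den_intCast_div_natCast {a : ℤ} {q : ℕ} (hq : 0 < q) (h : IsCoprime a q) :
    ((a : ℚ) / q).num = a ∧ ((a : ℚ) / q).den = q := by
  have hq' : (0 : ℤ) < q := by exact_mod_cast hq
  have hcop : a.natAbs.Coprime (q : ℤ).natAbs := Int.isCoprime_iff_gcd_eq_one.1 h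
  exact ⟨by exact_mod_cast Rat.num_div_eq_of_coprime hq' hcop,
    by exact_mod_cast Rat.den_div_eq_of_coprime hq' hcop⟩

-- `x ↦ (x.den, x.num)` identifies `F_Q \ {1}` with the pairs `a < q ≤ Q`, `gcd(q, a) = 1`, of
-- which there are `φ q` over each `q` by definition; removing `1` rather than `0` makes `q = 1`
-- fit, since `φ 1` counts `a = 0`.
theorem card_erase_one_fareyFinset (Q : ℕ) : #((fareyFinset Q).erase 1) = totientSum Q := by
  simp_rw [totientSum, Nat.totient_eq_card_coprime, ← card_sigma]
  refine card_nbij' (fun x => ⟨x.den, x.num.toNat⟩) (fun p => (p.2 : ℚ) / p.1) ?_ ?_ ?_ ?_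
  · intro x hx
    simp only [coe_erase, Set.mem_sdiff, mem_coe, mem_fareyFinset, Set.mem_singleton_iff] at hx
    obtain ⟨⟨hx0, hx1, hxQ⟩, hne⟩ := hx
    have hlt : x.num < x.den := Rat.num_lt_denom_iff.2 (lt_of_le_of_ne hx1 hne)
    have hnum := Rat.num_nonneg.2 hx0
    have hnat : x.num.toNat = x.num.natAbs := by omega
    simp only [coe_sigma, Set.mem_sigma_iff, mem_coe, mem_Ioc, mem_filter, mem_range]
    exact ⟨⟨x.pos, hxQ⟩, by omega, hnat ▸ x.reduced.symm⟩
  · rintro ⟨q, a⟩ hp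
    simp only [coe_sigma, Set.mem_sigma_iff, mem_coe, mem_Ioc, mem_filter, mem_range] at hp
    obtain ⟨⟨hq, hqQ⟩, haq, hcop⟩ := hp
    have hden := (num_den_intCast_div_natCast hq (Nat.isCoprime_iff_coprime.2 hcop.symm)).2
    push_cast at hden
    have hq' : (0 : ℚ) < q := by exact_mod_cast hq
    simp only [coe_erase, Set.mem_sdiff, mem_coe, mem_fareyFinset, Set.mem_singleton_iff]
    refine ⟨⟨by positivity, ?_, by rw [hden]; exact hqQ⟩, ?_⟩
    · rw [div_le_one hq']; exact_mod_cast haq.le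
    · rw [div_eq_one_iff_eq hq'.ne']; exact_mod_cast haq.ne
  · intro x hx
    simp only [coe_erase, Set.mem_sdiff, mem_coe, mem_fareyFinset] at hx
    exact natCast_num_toNat_div_den hx.1.1
  · rintro ⟨q, a⟩ hp
    simp only [coe_sigma, Set.mem_sigma_iff, mem_coe, mem_Ioc, mem_filter, mem_range] at hp
    obtain ⟨hnum, hden⟩ :=
      num_den_intCast_div_natCast hp.1.1 (Nat.isCoprime_iff_coprime.2 hp.2.2.symm)
    push_cast at hnum hden
    simp [hnum, hden]

theorem card_fareyFinset {Q : ℕ} (hQ : 0 < Q) : #(fareyFinset Q) = totientSum Q + 1 := by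
  rw [← card_erase_one_fareyFinset,
    card_erase_add_one (mem_fareyFinset.2 ⟨zero_le_one, le_rfl, hQ⟩)]

theorem den_add_den_le_of_num_mul_den_sub_eq_one {x y z : ℚ}
    (hxy : y.num * x.den - x.num * y.den = 1) (hxz : x < z) (hzy : z < y) :
    x.den + y.den ≤ z.den := by
  have hA := (Rat.lt_iff x z).1 hxz
  have hB := (Rat.lt_iff z y).1 hzy
  -- the two brackets are the positive numerators of `z - x` and `y - z`
  have hz : (z.den : ℤ) = (z.num * x.den - x.num * z.den) * y.den
      + (y.num * z.den - z.num * y.den) * x.den := by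
    linear_combination (-(z.den : ℤ)) * hxy
  have : (x.den : ℤ) + y.den ≤ z.den := by
    rw [hz]
    nlinarith [x.pos, y.pos]
  exact_mod_cast this

theorem exists_mul_sub_mul_eq_one {q q' : ℕ} (hq : 0 < q) (h : q.Coprime q') :
    ∃ a b : ℤ, 0 ≤ a ∧ a < q ∧ b * q - a * q' = 1 := by
  obtain ⟨u, v, huv⟩ := Nat.isCoprime_iff_coprime.2 h
  have hq' : (0 : ℤ) < q := by exact_mod_cast hq
  refine ⟨-v % q, u - (-v / q) * q', Int.emod_nonneg _ hq'.ne', Int.emod_lt_of_pos _ hq', ?_⟩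
  rw [Int.emod_def]
  linear_combination huv

theorem exists_adjacent_of_pairwise_lt {α : Type*} [LinearOrder α] {l : List α}
    (hl : l.Pairwise (· < ·)) {x y : α} (hx : x ∈ l) (hy : y ∈ l) (hxy : x < y)
    (hgap : ∀ z ∈ l, x < z → y ≤ z) (d : α) :
    ∃ i, i + 1 < l.length ∧ l.getD i d = x ∧ l.getD (i + 1) d = y := by
  have hlt := List.pairwise_iff_getElem.1 hl
  obtain ⟨i, hi, rfl⟩ := List.getElem_of_mem hx
  obtain ⟨j, hj, rfl⟩ := List.getElem_of_mem hy
  have hij : i < j := by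
    by_contra! hji
    rcases hji.lt_or_eq with h | rfl
    · exact (hlt j i hj hi h).not_gt hxy
    · exact hxy.false
  have hle : l[i + 1] ≤ l[j] := by
    rcases (Nat.succ_le_of_lt hij).lt_or_eq with h | h
    · exact (hlt _ _ _ hj h).le
    · subst h; exact le_rfl
  refine ⟨i, by omega, List.getD_eq_getElem _ _ hi, ?_⟩
  rw [List.getD_eq_getElem _ _ (by omega)]
  exact hle.antisymm (hgap _ (List.getElem_mem _) (hlt _ _ _ _ (Nat.lt_succ_self i)))

def fareyDenPairs (Q : ℕ) : Finset (ℕ × ℕ) :=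
  {p ∈ Ioc 0 Q ×ˢ Ioc 0 Q | p.1.Coprime p.2 ∧ Q < p.1 + p.2}

theorem pairwise_lt_fareyList (Q : ℕ) : (fareyList Q).Pairwise (· < ·) :=
  (sortedLT_sort _).pairwise

theorem exists_adjacent_fareyList_of_mem_fareyDenPairs {Q : ℕ} {p : ℕ × ℕ}
    (hp : p ∈ fareyDenPairs Q) : ∃ i, i + 1 < (fareyList Q).length ∧
      ((fareyList Q).getD i 0).den = p.1 ∧ ((fareyList Q).getD (i + 1) 0).den = p.2 := by
  simp only [fareyDenPairs, mem_filter, mem_product, mem_Ioc] at hp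
  obtain ⟨⟨⟨hq, hqQ⟩, hq', hq'Q⟩, hcop, hsum⟩ := hp
  obtain ⟨a, b, ha0, haq, hab⟩ := exists_mul_sub_mul_eq_one hq hcop
  obtain ⟨hxnum, hxden⟩ :=
    num_den_intCast_div_natCast hq (⟨-p.2, b, by linear_combination hab⟩ : IsCoprime a p.1)
  obtain ⟨hynum, hyden⟩ :=
    num_den_intCast_div_natCast hq' (⟨p.1, -a, by linear_combination hab⟩ : IsCoprime b p.2)
  set x : ℚ := a / p.1
  set y : ℚ := b / p.2
  have hdet : y.num * x.den - x.num * y.den = 1 := by rw [hxnum, hxden, hynum, hyden]; exact hab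
  have hxy : x < y := by rw [Rat.lt_iff]; linarith
  have hx : x ∈ fareyFinset Q := by
    refine mem_fareyFinset.2 ⟨by positivity, ?_, by rw [hxden]; exact hqQ⟩
    rw [Rat.le_iff, hxnum, hxden]
    simpa using haq.le
  have hy : y ∈ fareyFinset Q := by
    refine mem_fareyFinset.2 ⟨(mem_fareyFinset.1 hx).1.trans hxy.le, ?_, by rw [hyden]; exact hq'Q⟩
    rw [Rat.le_iff, hynum, hyden]
    have : (1 : ℤ) ≤ p.2 := by exact_mod_cast hq'
    simp only [Rat.num_ofNat, Rat.den_ofNat, Nat.cast_one, mul_one, one_mul]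
    nlinarith
  have hgap : ∀ z ∈ fareyList Q, x < z → y ≤ z := by
    intro z hz hxz
    by_contra! hzy
    have := den_add_den_le_of_num_mul_den_sub_eq_one hdet hxz hzy
    have := (mem_fareyFinset.1 ((mem_sort _).1 hz)).2.2
    omega
  obtain ⟨i, hi, hxi, hyi⟩ := exists_adjacent_of_pairwise_lt (pairwise_lt_fareyList Q)
    ((mem_sort _).2 hx) ((mem_sort _).2 hy) hxy hgap 0
  exact ⟨i, hi, by rw [hxi, hxden], by rw [hyi, hyden]⟩

theorem card_filter_coprime_lt_add {Q q : ℕ} (hq : q ∈ Ioc 0 Q) :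
    #{q' ∈ Ioc 0 Q | q.Coprime q' ∧ Q < q + q'} = q.totient := by
  rw [← Nat.filter_coprime_Ico_eq_totient q (Q - q + 1)]
  congr 1
  ext q'
  simp only [mem_filter, mem_Ioc, mem_Ico] at hq ⊢
  omega

theorem card_filter_fareyDenPairs_fst (Q : ℕ) (P : ℕ → Prop) [DecidablePred P] :
    #{p ∈ fareyDenPairs Q | P p.1} = ∑ q ∈ Ioc 0 Q with P q, q.totient := by
  rw [sum_filter,
    ← sum_congr rfl fun q hq => congrArg (ite (P q) · 0) (card_filter_coprime_lt_add hq)]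
  simp only [fareyDenPairs, filter_filter, card_filter, sum_product]
  refine sum_congr rfl fun q _ => ?_
  split_ifs with h <;> simp [h]

theorem card_fareyDenPairs (Q : ℕ) : #(fareyDenPairs Q) = totientSum Q := by
  simpa [totientSum] using card_filter_fareyDenPairs_fst Q fun _ => True

def fareyAdjacentDens (Q i : ℕ) : ℕ × ℕ :=
  (((fareyList Q).getD i 0).den, ((fareyList Q).getD (i + 1) 0).den)

theorem image_fareyAdjacentDens {Q : ℕ} (hQ : 0 < Q) :
    (range ((fareyList Q).length - 1)).image (fareyAdjacentDens Q) = fareyDenPairs Q ∧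
      Set.InjOn (fareyAdjacentDens Q) (range ((fareyList Q).length - 1)) := by
  -- both sides have `#F_Q - 1` elements, so surjectivity is all that needs to be shown
  have hcard : #(range ((fareyList Q).length - 1)) = #(fareyDenPairs Q) := by
    rw [card_range, fareyList, length_sort, card_fareyFinset hQ, card_fareyDenPairs]
    simp
  have hsub :
      fareyDenPairs Q ⊆ (range ((fareyList Q).length - 1)).image (fareyAdjacentDens Q) := by
    intro p hp
    obtain ⟨i, hi, h1, h2⟩ := exists_adjacent_fareyList_of_mem_fareyDenPairs hp
    exact mem_image.2 ⟨i, mem_range.2 (by omega), Prod.ext h1 h2⟩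
  have himage := (eq_of_subset_of_card_le hsub (card_image_le.trans hcard.le)).symm
  exact ⟨himage, injOn_of_card_image_eq (by rw [himage, hcard])⟩

theorem Nr_two_eq_card (Q d : ℕ) (c : Fin 2 → ℕ) :
    Nr Q 2 d c = #{p ∈ fareyDenPairs Q | p.1 % d = c 0 % d ∧ p.2 % d = c 1 % d} := by
  rcases Q.eq_zero_or_pos with rfl | hQ
  · simp [Nr, fareyList, fareyFinset, fareyDenPairs]
  obtain ⟨himage, hinj⟩ := image_fareyAdjacentDens hQ
  rw [← himage, filter_image, card_image_of_injOn (hinj.mono (filter_subset _ _)), Nr]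
  congr 1
  rw [show (fareyList Q).length + 1 - 2 = (fareyList Q).length - 1 by omega]
  simp [Fin.forall_fin_two, fareyAdjacentDens]

theorem rho_two_eq {Q : ℕ} (hQ : 0 < Q) (d : ℕ) (c : Fin 2 → ℕ) :
    rho Q 2 d c =
      #{p ∈ fareyDenPairs Q | p.1 % d = c 0 % d ∧ p.2 % d = c 1 % d} / (totientSum Q : ℝ) := by
  rw [rho, Nr_two_eq_card, card_fareyFinset hQ]
  push_cast
  ring

theorem swap_mem_fareyDenPairs {Q : ℕ} {p : ℕ × ℕ} :
    p.swap ∈ fareyDenPairs Q ↔ p ∈ fareyDenPairs Q := by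
  simp only [fareyDenPairs, mem_filter, mem_product, Prod.fst_swap, Prod.snd_swap,
    Nat.coprime_comm, add_comm p.2]
  tauto

theorem odd_of_mem_fareyDenPairs {Q : ℕ} {p : ℕ × ℕ} (hp : p ∈ fareyDenPairs Q)
    (h : p.1 % 2 = 0) : p.2 % 2 = 1 := by
  have hcop : Nat.gcd p.1 p.2 = 1 := (mem_filter.1 hp).2.1
  by_contra h'
  have := Nat.dvd_gcd (Nat.dvd_of_mod_eq_zero h) (Nat.dvd_of_mod_eq_zero (n := p.2) (by omega))
  rw [hcop] at this
  omega

theorem card_fareyDenPairs_even_even (Q : ℕ) :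
    #{p ∈ fareyDenPairs Q | p.1 % 2 = 0 ∧ p.2 % 2 = 0} = 0 := by
  rw [card_eq_zero, filter_eq_empty_iff]
  rintro p hp ⟨h1, h2⟩
  have := odd_of_mem_fareyDenPairs hp h1
  omega

theorem card_fareyDenPairs_even_odd (Q : ℕ) :
    #{p ∈ fareyDenPairs Q | p.1 % 2 = 0 ∧ p.2 % 2 = 1} = evenTotientSum Q := by
  rw [evenTotientSum, ← card_filter_fareyDenPairs_fst]
  congr 1
  refine filter_congr fun p hp => ?_
  rw [Nat.even_iff]
  exact ⟨And.left, fun h => ⟨h, odd_of_mem_fareyDenPairs hp h⟩⟩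

theorem card_fareyDenPairs_odd_even (Q : ℕ) :
    #{p ∈ fareyDenPairs Q | p.1 % 2 = 1 ∧ p.2 % 2 = 0} = evenTotientSum Q := by
  rw [← card_fareyDenPairs_even_odd]
  refine card_nbij' Prod.swap Prod.swap ?_ ?_ (fun _ _ => rfl) (fun _ _ => rfl) <;>
    · intro p hp
      simp only [coe_filter, Set.mem_ofPred_eq, swap_mem_fareyDenPairs, Prod.fst_swap,
        Prod.snd_swap] at hp ⊢
      tauto

theorem card_fareyDenPairs_odd_odd (Q : ℕ) :
    #{p ∈ fareyDenPairs Q | p.1 % 2 = 1 ∧ p.2 % 2 = 1} + 2 * evenTotientSum Q =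
      totientSum Q := by
  have hodd : #{p ∈ fareyDenPairs Q | p.1 % 2 = 1 ∧ p.2 % 2 = 1} +
      #{p ∈ fareyDenPairs Q | p.1 % 2 = 1 ∧ p.2 % 2 = 0} =
        ∑ q ∈ Ioc 0 Q with ¬Even q, q.totient := by
    rw [← card_filter_fareyDenPairs_fst, ← card_filter_add_card_filter_not
      (s := {p ∈ fareyDenPairs Q | ¬Even p.1}) (p := fun p => p.2 % 2 = 1)]
    simp only [filter_filter, Nat.not_even_iff]
    congr 3
    ext p
    omega
  have hsplit : evenTotientSum Q + ∑ q ∈ Ioc 0 Q with ¬Even q, q.totient = totientSum Q :=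
    sum_filter_add_sum_filter_not _ _ _
  have := card_fareyDenPairs_odd_even Q
  omega

theorem tendsto_natCast_div_div_natCast {m : ℕ} (hm : 0 < m) :
    Tendsto (fun Q : ℕ => ((Q / m : ℕ) : ℝ) / Q) atTop (𝓝 (1 / m)) := by
  have hm' : (0 : ℝ) < m := by exact_mod_cast hm
  have hlower : Tendsto (fun Q : ℕ => 1 / (m : ℝ) - 1 / Q) atTop (𝓝 (1 / m)) := by
    simpa using tendsto_one_div_atTop_nhds_zero_nat.const_sub (1 / (m : ℝ))
  refine tendsto_of_tendsto_of_tendsto_of_le_of_le' hlower tendsto_const_nhds ?_ ?_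
  · filter_upwards [eventually_gt_atTop 0] with Q hQ
    have hQ' : (0 : ℝ) < Q := by exact_mod_cast hQ
    have hlt : (Q : ℝ) < m * ((Q / m : ℕ) + 1) := by exact_mod_cast Nat.lt_mul_div_succ Q hm
    rw [div_sub_div _ _ hm'.ne' hQ'.ne', div_le_div_iff₀ (by positivity) hQ']
    nlinarith
  · filter_upwards [eventually_gt_atTop 0] with Q hQ
    have hQ' : (0 : ℝ) < Q := by exact_mod_cast hQ
    calc ((Q / m : ℕ) : ℝ) / Q ≤ (Q / m) / Q := by gcongr; exact Nat.cast_div_le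
      _ = 1 / m := by field_simp

theorem tendsto_comp_div_div_sq {f : ℕ → ℝ} {L : ℝ}
    (hf : Tendsto (fun n : ℕ => f n / (n : ℝ) ^ 2) atTop (𝓝 L)) {m : ℕ} (hm : 0 < m) :
    Tendsto (fun Q : ℕ => f (Q / m) / (Q : ℝ) ^ 2) atTop (𝓝 (L / (m : ℝ) ^ 2)) := by
  have h := (hf.comp (Nat.tendsto_div_const_atTop hm.ne')).mul
    ((tendsto_natCast_div_div_natCast hm).pow 2)
  rw [div_pow, one_pow, ← div_eq_mul_one_div] at h
  refine h.congr' ?_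
  filter_upwards [eventually_ge_atTop m] with Q hQ
  have : (0 : ℝ) < (Q / m : ℕ) := by exact_mod_cast Nat.div_pos hQ hm
  have : (0 : ℝ) < Q := by exact_mod_cast hm.trans_le hQ
  simp only [Function.comp_apply]
  field_simp

theorem tendsto_tsum_mul_comp_div_div_sq {ι : Type*} {f : ℕ → ℝ} {L : ℝ}
    (hf : Tendsto (fun n : ℕ => f n / (n : ℝ) ^ 2) atTop (𝓝 L))
    (hf_le : ∀ n : ℕ, |f n| ≤ (n : ℝ) ^ 2) {w : ι → ℝ} (hw : ∀ i, |w i| ≤ 1) {m : ι → ℕ}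
    (hm : Summable fun i => 1 / (m i : ℝ) ^ 2) :
    Tendsto (fun Q : ℕ => ∑' i, w i * f (Q / m i) / (Q : ℝ) ^ 2) atTop
      (𝓝 (∑' i, w i * L / (m i : ℝ) ^ 2)) := by
  -- an index with `m i = 0` contributes `0` on both sides: `Q / 0 = 0`, `f 0 = 0`, `1 / 0 = 0`
  have hf0 : f 0 = 0 := by simpa using hf_le 0
  refine tendsto_tsum_of_dominated_convergence hm (fun i => ?_) ?_
  · rcases (m i).eq_zero_or_pos with h | h
    · simp [h, hf0]
    · simpa only [mul_div_assoc] using (tendsto_comp_div_div_sq hf h).const_mul (w i)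
  · filter_upwards [eventually_gt_atTop 0] with Q hQ i
    rcases (m i).eq_zero_or_pos with h | h
    · simp [h, hf0]
    have hQ' : (0 : ℝ) < Q := by exact_mod_cast hQ
    have hm' : (0 : ℝ) < m i := by exact_mod_cast h
    have hdiv : ((Q / m i : ℕ) : ℝ) * m i ≤ Q := by exact_mod_cast Nat.div_mul_le_self Q (m i)
    rw [norm_div, norm_mul, Real.norm_eq_abs, Real.norm_eq_abs, norm_pow, Real.norm_natCast,
      div_le_div_iff₀ (by positivity) (by positivity), one_mul]
    calc |w i| * |f (Q / m i)| * (m i : ℝ) ^ 2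
        ≤ 1 * ((Q / m i : ℕ) : ℝ) ^ 2 * (m i : ℝ) ^ 2 := by
          gcongr
          exacts [hw i, hf_le _]
      _ = (((Q / m i : ℕ) : ℝ) * m i) ^ 2 := by ring
      _ ≤ (Q : ℝ) ^ 2 := by gcongr

theorem tsum_moebius_div_sq : ∑' n : ℕ, (moebius n : ℝ) / (n : ℝ) ^ 2 = 6 / π ^ 2 := by
  have h := LSeries_one_mul_Lseries_moebius (s := 2) (by norm_num)
  rw [LSeries_one_eq_riemannZeta (by norm_num), riemannZeta_two] at h
  have h2 : LSeries (fun n => (moebius n : ℂ)) 2 =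
      ((∑' n : ℕ, (moebius n : ℝ) / (n : ℝ) ^ 2 : ℝ) : ℂ) := by
    rw [LSeries, Complex.ofReal_tsum]
    congr 1; ext n
    rcases eq_or_ne n 0 with rfl | hn
    · simp
    · rw [LSeries.term_of_ne_zero hn]; push_cast; norm_cast
  rw [h2] at h
  have h3 : π ^ 2 / 6 * ∑' n : ℕ, (moebius n : ℝ) / (n : ℝ) ^ 2 = 1 := by
    exact_mod_cast h
  have hpi : π ^ 2 ≠ 0 := (pow_pos pi_pos 2).ne'
  field_simp
  linear_combination 6 * h3

theorem sum_Ioc_natCast (n : ℕ) : ∑ m ∈ Ioc 0 n, (m : ℝ) = n * (n + 1) / 2 := by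
  induction n with
  | zero => simp
  | succ n ih => rw [sum_Ioc_succ_top n.zero_le, ih]; push_cast; ring

theorem totientSum_eq_sum_moebius (Q : ℕ) :
    (totientSum Q : ℝ) =
      ∑ d ∈ Ioc 0 Q, (moebius d : ℝ) * ((Q / d : ℕ) * ((Q / d : ℕ) + 1) / 2) := by
  have hφ : ∀ n ∈ Ioc 0 Q, (n.totient : ℝ) =
      ((moebius : ArithmeticFunction ℝ) * (ArithmeticFunction.id : ArithmeticFunction ℝ)) n := by
    intro n hn
    rw [mul_apply, ← (sum_eq_iff_sum_mul_moebius_eq (f := fun n => (n.totient : ℝ))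
      (g := fun n => (n : ℝ))).1 (fun n _ => by exact_mod_cast Nat.sum_totient n) n
        (mem_Ioc.1 hn).1]
    simp
  simp_rw [totientSum, Nat.cast_sum, sum_congr rfl hφ, sum_Ioc_mul_eq_sum_sum, ← sum_Ioc_natCast]
  simp

theorem tendsto_natCast_mul_succ_div_two_div_sq :
    Tendsto (fun n : ℕ => (n * (n + 1) / 2 : ℝ) / (n : ℝ) ^ 2) atTop (𝓝 (1 / 2)) := by
  have h := (tendsto_one_div_atTop_nhds_zero_nat.const_mul (1 / 2 : ℝ)).const_add (1 / 2 : ℝ)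
  rw [mul_zero, add_zero] at h
  refine h.congr' ?_
  filter_upwards [eventually_gt_atTop 0] with n hn
  have : (0 : ℝ) < n := by exact_mod_cast hn
  field_simp

theorem tendsto_totientSum_div_sq :
    Tendsto (fun Q : ℕ => (totientSum Q : ℝ) / (Q : ℝ) ^ 2) atTop (𝓝 (3 / π ^ 2)) := by
  have hbound (n : ℕ) : |(n * (n + 1) / 2 : ℝ)| ≤ (n : ℝ) ^ 2 := by
    rw [abs_of_nonneg (by positivity)]
    rcases n.eq_zero_or_pos with rfl | hn
    · simp
    · have : (1 : ℝ) ≤ n := by exact_mod_cast hn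
      nlinarith
  have hlim := tendsto_tsum_mul_comp_div_div_sq tendsto_natCast_mul_succ_div_two_div_sq hbound
    (w := fun d => (moebius d : ℝ)) (fun d => by exact_mod_cast abs_moebius_le_one)
    (Real.summable_one_div_nat_pow.2 one_lt_two)
  have hval : ∑' d : ℕ, (moebius d : ℝ) * (1 / 2) / (d : ℝ) ^ 2 = 3 / π ^ 2 := by
    rw [tsum_congr fun d => by rw [mul_comm, mul_div_assoc], tsum_mul_left, tsum_moebius_div_sq]
    ring
  rw [hval] at hlim
  refine hlim.congr fun Q => ?_
  rw [totientSum_eq_sum_moebius, sum_div, tsum_eq_sum (s := Ioc 0 Q)]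
  intro d hd
  rcases d.eq_zero_or_pos with rfl | hd0
  · simp
  · rw [Nat.div_eq_of_lt (by simp_all)]
    simp

theorem evenTotientSum_eq (Q : ℕ) :
    evenTotientSum Q = totientSum (Q / 2) + evenTotientSum (Q / 2) := by
  have hsum : evenTotientSum Q = ∑ m ∈ Ioc 0 (Q / 2), (2 * m).totient := by
    refine sum_bij' (fun q _ => q / 2) (fun m _ => 2 * m) ?_ ?_ ?_ ?_ ?_
    all_goals
      intro q hq
      simp only [mem_filter, mem_Ioc, even_iff_two_dvd] at hq ⊢
    any_goals omega
    congr 1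
    omega
  have hφ (m : ℕ) : (2 * m).totient = m.totient + if Even m then m.totient else 0 := by
    split_ifs with h
    · rw [Nat.totient_two_mul_of_even h, two_mul]
    · rw [Nat.totient_two_mul_of_odd (Nat.not_even_iff_odd.1 h), add_zero]
  rw [hsum, sum_congr rfl fun m _ => hφ m, sum_add_distrib, totientSum, evenTotientSum,
    sum_filter]

theorem evenTotientSum_eq_sum_totientSum (Q : ℕ) :
    evenTotientSum Q = ∑ k ∈ range Q, totientSum (Q / 2 ^ (k + 1)) := by
  have key (K : ℕ) : evenTotientSum Q =
      ∑ k ∈ range K, totientSum (Q / 2 ^ (k + 1)) + evenTotientSum (Q / 2 ^ K) := by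
    induction K with
    | zero => simp
    | succ K ih =>
      rw [ih, evenTotientSum_eq, sum_range_succ, Nat.div_div_eq_div_mul, ← pow_succ, add_assoc]
  rw [key Q, Nat.div_eq_of_lt Nat.lt_two_pow_self]
  rfl

theorem totientSum_le_sq (n : ℕ) : totientSum n ≤ n ^ 2 :=
  calc totientSum n ≤ ∑ _q ∈ Ioc 0 n, n :=
        sum_le_sum fun q hq => (Nat.totient_le q).trans (mem_Ioc.1 hq).2
    _ = n ^ 2 := by simp [sq]

theorem totientSum_pos {Q : ℕ} (hQ : 0 < Q) : 0 < totientSum Q :=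
  sum_pos' (fun _ _ => Nat.zero_le _) ⟨1, mem_Ioc.2 ⟨one_pos, hQ⟩, by simp⟩

theorem hasSum_one_div_two_pow_succ_sq :
    HasSum (fun k : ℕ => 1 / ((2 : ℝ) ^ (k + 1)) ^ 2) (1 / 3) := by
  have h := (hasSum_geometric_of_lt_one (r := (1 / 4 : ℝ)) (by norm_num) (by norm_num)).mul_left
    (1 / 4)
  rw [show (1 / 4 : ℝ) * (1 - 1 / 4)⁻¹ = 1 / 3 by norm_num] at h
  refine (funext fun k => ?_ : (fun k : ℕ => 1 / ((2 : ℝ) ^ (k + 1)) ^ 2) = _) ▸ h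
  rw [← pow_mul, mul_comm, pow_mul, pow_succ, one_div_pow]
  norm_num

theorem tendsto_evenTotientSum_div_sq :
    Tendsto (fun Q : ℕ => (evenTotientSum Q : ℝ) / (Q : ℝ) ^ 2) atTop (𝓝 (1 / π ^ 2)) := by
  have hlim := tendsto_tsum_mul_comp_div_div_sq tendsto_totientSum_div_sq
    (fun n => by rw [abs_of_nonneg (Nat.cast_nonneg _)]; exact_mod_cast totientSum_le_sq n)
    (w := fun _ => 1) (fun _ => by simp) (m := fun k => 2 ^ (k + 1)) ?_
  · have hval : ∑' k : ℕ, 1 * (3 / π ^ 2) / (((2 ^ (k + 1) : ℕ) : ℝ)) ^ 2 = 1 / π ^ 2 := by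
      rw [tsum_congr fun k => show 1 * (3 / π ^ 2) / (((2 ^ (k + 1) : ℕ) : ℝ)) ^ 2 =
        3 / π ^ 2 * (1 / ((2 : ℝ) ^ (k + 1)) ^ 2) by push_cast; ring, tsum_mul_left,
        hasSum_one_div_two_pow_succ_sq.tsum_eq]
      ring
    rw [hval] at hlim
    refine hlim.congr fun Q => ?_
    rw [evenTotientSum_eq_sum_totientSum, Nat.cast_sum, sum_div, tsum_eq_sum (s := range Q)]
    · simp
    · intro k hk
      rw [Nat.div_eq_of_lt]
      · simp [totientSum]
      · exact Nat.lt_two_pow_self.trans_le (Nat.pow_le_pow_right two_pos (by simp at hk; omega))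
  · exact_mod_cast hasSum_one_div_two_pow_succ_sq.summable

theorem tendsto_evenTotientSum_div_totientSum :
    Tendsto (fun Q : ℕ => (evenTotientSum Q : ℝ) / totientSum Q) atTop (𝓝 (1 / 3)) := by
  have h := tendsto_evenTotientSum_div_sq.div tendsto_totientSum_div_sq (by positivity)
  rw [show 1 / π ^ 2 / (3 / π ^ 2) = 1 / 3 by field_simp] at h
  refine h.congr' ?_
  filter_upwards [eventually_gt_atTop 0] with Q hQ
  exact div_div_div_cancel_right₀ (by positivity) _ _

theorem rho_even_odd {Q : ℕ} (hQ : 0 < Q) :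
    rho Q 2 2 ![0, 1] = evenTotientSum Q / (totientSum Q : ℝ) := by
  simp [rho_two_eq hQ, card_fareyDenPairs_even_odd]

theorem rho_odd_even {Q : ℕ} (hQ : 0 < Q) :
    rho Q 2 2 ![1, 0] = evenTotientSum Q / (totientSum Q : ℝ) := by
  simp [rho_two_eq hQ, card_fareyDenPairs_odd_even]

theorem rho_odd_odd {Q : ℕ} (hQ : 0 < Q) :
    rho Q 2 2 ![1, 1] = 1 - 2 * (evenTotientSum Q / (totientSum Q : ℝ)) := by
  have hS : (totientSum Q : ℝ) ≠ 0 := by exact_mod_cast (totientSum_pos hQ).ne'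
  have hcount : (#{p ∈ fareyDenPairs Q | p.1 % 2 = 1 ∧ p.2 % 2 = 1} : ℝ) =
      totientSum Q - 2 * evenTotientSum Q := by
    rw [← card_fareyDenPairs_odd_odd Q]
    push_cast
    ring
  simp only [rho_two_eq hQ, Matrix.cons_val_zero, Matrix.cons_val_one, Nat.one_mod, hcount]
  field_simp

theorem rho_even_even (Q : ℕ) : rho Q 2 2 ![0, 0] = 0 := by
  simp [rho, Nr_two_eq_card, card_fareyDenPairs_even_even]

/-- As `Q → ∞`, each of the proportions of pairs of consecutive Farey
fractions with denominators (even, odd), (odd, even) and (odd, odd) tends to `1/3`,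
while the proportion of pairs (even, even) is `0` for every `Q`. -/
theorem rho_two_mod_two :
    Tendsto (fun Q : ℕ => rho Q 2 2 ![0, 1]) atTop (𝓝 (1 / 3)) ∧
    Tendsto (fun Q : ℕ => rho Q 2 2 ![1, 0]) atTop (𝓝 (1 / 3)) ∧
    Tendsto (fun Q : ℕ => rho Q 2 2 ![1, 1]) atTop (𝓝 (1 / 3)) ∧
    ∀ Q : ℕ, rho Q 2 2 ![0, 0] = 0 := by
  have h := tendsto_evenTotientSum_div_totientSum
  have h' := (h.const_mul 2).const_sub 1
  rw [show (1 : ℝ) - 2 * (1 / 3) = 1 / 3 by norm_num] at h'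
  refine ⟨h.congr' ?_, h.congr' ?_, h'.congr' ?_, rho_even_even⟩ <;>
    filter_upwards [eventually_gt_atTop 0] with Q hQ
  exacts [(rho_even_odd hQ).symm, (rho_odd_even hQ).symm, (rho_odd_odd hQ).symm]
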